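/- arXiv:1605.01547 — 10 statements merged into one kernel-verified Lean document; each statement's English description precedes it below -/
import Mathlib

section
/- For all complex numbers λ, μ with μ² ≠ 4 and λ ≠ 0, if Ψ(λ,μ) = (4 - μ² + λ²)/(4λ) and F(λ,μ) = (2λ²/(4-μ²), μ + μλ²/(4-μ²)), then Ψ(F(λ,μ)) = 2Ψ(λ,μ)² - 1 (i.e., F is semi-conjugate to the Chebyshev map α(x)=2x²-1 via Ψ). -/
/-!
Write `d = 4 - μ²`, so that `Ψ(λ, μ) = (d + λ²)/(4λ)` and `F(λ, μ) = (2λ²/d, μ(d + λ²)/d)`.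
Eliminating `μ² = 4 - d` shows that the numerator of `Ψ ∘ F` is `((d + λ²)² - 8λ²)/d`, while its
denominator is `8λ²/d`; the quotient `((d + λ²)² - 8λ²)/(8λ²)` is exactly `2Ψ² - 1`.
-/

section SemiConj

variable {K : Type*} [Field K]

lemma four_sub_sq_add_sq_of_map (l m : K) (hd : 4 - m ^ 2 ≠ 0) :
    4 - (m + m * l ^ 2 / (4 - m ^ 2)) ^ 2 + (2 * l ^ 2 / (4 - m ^ 2)) ^ 2
      = ((4 - m ^ 2 + l ^ 2) ^ 2 - 8 * l ^ 2) / (4 - m ^ 2) := by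
  field_simp
  ring

lemma two_mul_sq_sub_one_eq_div (s l : K) (h2 : (2 : K) ≠ 0) (hl : l ≠ 0) :
    2 * (s / (4 * l)) ^ 2 - 1 = (s ^ 2 - 8 * l ^ 2) / (8 * l ^ 2) := by
  have h4 : (4 : K) ≠ 0 := (by norm_num : (2 : K) ^ 2 = 4) ▸ pow_ne_zero 2 h2
  have h8 : (8 : K) ≠ 0 := (by norm_num : (2 : K) ^ 3 = 8) ▸ pow_ne_zero 3 h2
  field_simp
  ring

theorem psi_map_eq_chebyshev (l m : K) (h2 : (2 : K) ≠ 0) (hd : 4 - m ^ 2 ≠ 0) (hl : l ≠ 0) :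
    (4 - (m + m * l ^ 2 / (4 - m ^ 2)) ^ 2 + (2 * l ^ 2 / (4 - m ^ 2)) ^ 2)
        / (4 * (2 * l ^ 2 / (4 - m ^ 2)))
      = 2 * ((4 - m ^ 2 + l ^ 2) / (4 * l)) ^ 2 - 1 := by
  have h8 : (8 : K) ≠ 0 := (by norm_num : (2 : K) ^ 3 = 8) ▸ pow_ne_zero 3 h2
  rw [four_sub_sq_add_sq_of_map l m hd, two_mul_sq_sub_one_eq_div _ l h2 hl,
    show 4 * (2 * l ^ 2 / (4 - m ^ 2)) = 8 * l ^ 2 / (4 - m ^ 2) by ring]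
  field_simp

end SemiConj

/-- `F(λ,μ) = (2λ²/(4-μ²), μ + μλ²/(4-μ²))` is semi-conjugate to the Chebyshev map
`α(x) = 2x² - 1` via `Ψ(λ,μ) = (4 - μ² + λ²)/(4λ)`. -/
theorem psi_semiconjugacy (l m : ℂ) (hm : m ^ 2 ≠ 4) (hl : l ≠ 0)
    (Ψ : ℂ → ℂ → ℂ) (hΨ : ∀ a b, Ψ a b = (4 - b ^ 2 + a ^ 2) / (4 * a))
    (F : ℂ → ℂ → ℂ × ℂ)
    (hF : ∀ a b, F a b = (2 * a ^ 2 / (4 - b ^ 2), b + b * a ^ 2 / (4 - b ^ 2))) :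
    Ψ (F l m).1 (F l m).2 = 2 * (Ψ l m) ^ 2 - 1 := by
  have hd : (4 : ℂ) - m ^ 2 ≠ 0 := sub_ne_zero.mpr (Ne.symm hm)
  simp only [hF, hΨ]
  exact psi_map_eq_chebyshev l m two_ne_zero hd hl
end

section
/- For θ ∈ ℂ with μ² ≠ 4, letting H_θ(λ,μ) = 4 - μ² + λ² - 4λθ and θ₁, θ₂ = ±√((1+θ)/2), one has H_θ(F(λ,μ)) = H_{θ₁}(λ,μ) · H_{θ₂}(λ,μ) / (4 - μ²), where F(λ,μ) = (2λ²/(4-μ²), μ + μλ²/(4-μ²)). -/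
/-- `H_θ(F(λ,μ)) = H_{θ₁}(λ,μ) · H_{θ₂}(λ,μ) / (4 - μ²)` where `θ₁, θ₂ = ±√((1+θ)/2)`. -/
theorem H_theta_functional_equation (θ θ₁ θ₂ l m : ℂ) (hm : m ^ 2 ≠ 4)
    (hθ₁ : θ₁ ^ 2 = (1 + θ) / 2) (hθ₂ : θ₂ = -θ₁)
    (H : ℂ → ℂ → ℂ → ℂ) (hH : ∀ t a b, H t a b = 4 - b ^ 2 + a ^ 2 - 4 * a * t)
    (F : ℂ → ℂ → ℂ × ℂ)
    (hF : ∀ a b, F a b = (2 * a ^ 2 / (4 - b ^ 2), b + b * a ^ 2 / (4 - b ^ 2))) :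
    H θ (F l m).1 (F l m).2 = H θ₁ l m * H θ₂ l m / (4 - m ^ 2) := by
  have h4 : (4 : ℂ) - m ^ 2 ≠ 0 := fun h => hm (by linear_combination -h)
  have hθ : θ = 2 * θ₁ ^ 2 - 1 := by rw [hθ₁]; ring
  rw [hF, hH, hH, hH, hθ, hθ₂]
  field_simp
  ring
end

section
/- Define F₁ : ℂ³ → ℂ³ by F₁(z₀,z₁,z₂) = (z₀(z₀² - z₁² - z₂²), z₁²z₂, (z₀² - z₂²)z₂). Then for every θ ∈ ℂ, with L_θ(z) = z₀² - z₁² - z₂² - 2z₁z₂θ, one has L_{2θ²-1}(F₁(z)) = (z₀² - z₂²) · L_θ(z) · L_{-θ}(z) for all z ∈ ℂ³. -/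
/-- `L_{2θ²-1}(F₁(z)) = (z₀² - z₂²) · L_θ(z) · L_{-θ}(z)` where
`L_θ(z) = z₀² - z₁² - z₂² - 2z₁z₂θ` and
`F₁(z₀,z₁,z₂) = (z₀(z₀²-z₁²-z₂²), z₁²z₂, (z₀²-z₂²)z₂)`. -/
theorem L_theta_functional_equation (θ : ℂ)
    (L : ℂ → ℂ × ℂ × ℂ → ℂ)
    (hL : ∀ t z, L t z = z.1 ^ 2 - z.2.1 ^ 2 - z.2.2 ^ 2 - 2 * z.2.1 * z.2.2 * t)
    (F₁ : ℂ × ℂ × ℂ → ℂ × ℂ × ℂ)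
    (hF₁ : ∀ z : ℂ × ℂ × ℂ, F₁ z = (z.1 * (z.1 ^ 2 - z.2.1 ^ 2 - z.2.2 ^ 2),
      z.2.1 ^ 2 * z.2.2, (z.1 ^ 2 - z.2.2 ^ 2) * z.2.2)) :
    ∀ z : ℂ × ℂ × ℂ,
      L (2 * θ ^ 2 - 1) (F₁ z) = (z.1 ^ 2 - z.2.2 ^ 2) * L θ z * L (-θ) z := by
  intro z; simp only [hL, hF₁]; ring
end

section
/- The set of fixed points of F₁(z₀,z₁,z₂) = (z₀(z₀² - z₁² - z₂²), z₁²z₂, (z₀² - z₂²)z₂) in ℂ³ is exactly {(z₀,0,z₂) : z₀² - z₂² = 1} ∪ {(0,i,-i), (0,-i,i), (0,0,0), (0,0,i), (0,0,-i)}. -/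
open Complex

/-- The fixed points of `F₁(z₀,z₁,z₂) = (z₀(z₀²-z₁²-z₂²), z₁²z₂, (z₀²-z₂²)z₂)` in `ℂ³` are
exactly `{(z₀,0,z₂) : z₀² - z₂² = 1} ∪ {(0,i,-i),(0,-i,i),(0,0,0),(0,0,i),(0,0,-i)}`. -/
theorem fixed_points_of_F1
    (F₁ : ℂ × ℂ × ℂ → ℂ × ℂ × ℂ)
    (hF₁ : ∀ z : ℂ × ℂ × ℂ, F₁ z = (z.1 * (z.1 ^ 2 - z.2.1 ^ 2 - z.2.2 ^ 2),
      z.2.1 ^ 2 * z.2.2, (z.1 ^ 2 - z.2.2 ^ 2) * z.2.2)) :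
    {z : ℂ × ℂ × ℂ | F₁ z = z} =
      {z : ℂ × ℂ × ℂ | z.2.1 = 0 ∧ z.1 ^ 2 - z.2.2 ^ 2 = 1} ∪
        {((0:ℂ), (I:ℂ), (-I:ℂ)), ((0:ℂ), (-I:ℂ), (I:ℂ)), ((0:ℂ), (0:ℂ), (0:ℂ)),
          ((0:ℂ), (0:ℂ), (I:ℂ)), ((0:ℂ), (0:ℂ), (-I:ℂ))} := by
  ext ⟨a, b, c⟩
  simp only [Set.mem_setOf_eq, hF₁, Prod.mk.injEq, Set.mem_union, Set.mem_insert_iff,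
    Set.mem_singleton_iff]
  constructor
  · rintro ⟨h1, h2, h3⟩
    by_cases hc : c = 0
    · subst hc
      simp only [mul_zero] at h2
      have hb : b = 0 := h2.symm
      subst hb
      by_cases ha : a = 0
      · subst ha; right; right; right; left; exact ⟨rfl, rfl, rfl⟩
      · left
        refine ⟨rfl, ?_⟩
        have : a * (a ^ 2 - 0 ^ 2 - 0 ^ 2) = a * 1 := by rw [h1]; ring
        have h4 := mul_left_cancel₀ ha this
        linear_combination h4
    · have h4 : a ^ 2 - c ^ 2 = 1 :=
        mul_right_cancel₀ hc (h3.trans (one_mul c).symm)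
      by_cases hb : b = 0
      · subst hb; left; exact ⟨rfl, h4⟩
      · -- a * b^2 = 0
        have h5 : a * b ^ 2 = 0 := by linear_combination a * h4 - h1
        have ha : a = 0 := by
          rcases mul_eq_zero.1 h5 with h | h
          · exact h
          · exact absurd (pow_eq_zero_iff (n := 2) (by norm_num) |>.1 h) hb
        subst ha
        have hc2 : c ^ 2 = -1 := by linear_combination -h4
        have hbc : b * c = 1 := by
          have : b * (b * c) = b * 1 := by linear_combination h2
          exact mul_left_cancel₀ hb this
        have : (c - I) * (c + I) = 0 := by
          linear_combination hc2 - Complex.I_sq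
        rcases mul_eq_zero.1 this with h | h
        · have hcI : c = I := by linear_combination h
          subst hcI
          have hbI : b = -I := by
            linear_combination -I * hbc + b * Complex.I_sq
          right; right; left; exact ⟨rfl, hbI, rfl⟩
        · have hcI : c = -I := by linear_combination h
          subst hcI
          have hbI : b = I := by
            linear_combination I * hbc + b * Complex.I_sq
          right; left; exact ⟨rfl, hbI, rfl⟩
  · rintro (⟨hb, h⟩ | h | h | h | h | h)
    · subst hb
      exact ⟨by linear_combination a * h, by ring, by linear_combination c * h⟩
    all_goals
      obtain ⟨ha, hb, hc⟩ := h
      subst ha; subst hb; subst hc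
      have h3 : (I : ℂ) ^ 3 = -I := by
        rw [pow_succ, Complex.I_sq]; ring
      refine ⟨by ring, ?_, ?_⟩ <;>
        first
          | ring1
          | (ring_nf; rw [h3]; try ring)
end

section
/- Let P = ⋃_{x ∈ [-1,1]} {z ∈ ℂ³ : z₀² - z₁² - z₂² - 2z₁z₂x = 0}. Then P is invariant under F₁(z₀,z₁,z₂) = (z₀(z₀² - z₁² - z₂²), z₁²z₂, (z₀² - z₂²)z₂), i.e., F₁(P) ⊆ P. -/
/-- The joint spectrum `P = ⋃_{x ∈ [-1,1]} {z : z₀² - z₁² - z₂² - 2z₁z₂x = 0}` is invariant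
under `F₁(z₀,z₁,z₂) = (z₀(z₀²-z₁²-z₂²), z₁²z₂, (z₀²-z₂²)z₂)`. -/
theorem jointSpectrum_invariant_under_F1
    (P : Set (ℂ × ℂ × ℂ))
    (hP : P = {z : ℂ × ℂ × ℂ | ∃ x : ℝ, x ∈ Set.Icc (-1 : ℝ) 1 ∧
      z.1 ^ 2 - z.2.1 ^ 2 - z.2.2 ^ 2 - 2 * z.2.1 * z.2.2 * (x : ℂ) = 0})
    (F₁ : ℂ × ℂ × ℂ → ℂ × ℂ × ℂ)
    (hF₁ : ∀ z : ℂ × ℂ × ℂ, F₁ z = (z.1 * (z.1 ^ 2 - z.2.1 ^ 2 - z.2.2 ^ 2),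
      z.2.1 ^ 2 * z.2.2, (z.1 ^ 2 - z.2.2 ^ 2) * z.2.2)) :
    F₁ '' P ⊆ P := by
  subst hP
  rintro w ⟨z, ⟨x, ⟨hx1, hx2⟩, heq⟩, rfl⟩
  refine ⟨2 * x ^ 2 - 1, ⟨by nlinarith, by nlinarith⟩, ?_⟩
  rw [hF₁]
  push_cast
  linear_combination (z.1 ^ 4 + (-z.2.1 ^ 2 - 2 * z.2.2 ^ 2 + 2 * z.2.1 * z.2.2 * (x : ℂ)) * z.1 ^ 2
    + ((z.2.1 ^ 2 + z.2.2 ^ 2) ^ 2 + 2 * z.2.2 ^ 4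
      - 2 * z.2.1 ^ 2 * z.2.2 ^ 2 * (2 * (x : ℂ) ^ 2 - 1)
      + (z.2.1 ^ 2 + z.2.2 ^ 2 + 2 * z.2.1 * z.2.2 * (x : ℂ))
        * (-z.2.1 ^ 2 - 2 * z.2.2 ^ 2 + 2 * z.2.1 * z.2.2 * (x : ℂ)))) * heq
end

section
/- The set P = ⋃_{x ∈ [-1,1]} {z ∈ ℂ³ : z₀² - z₁² - z₂² - 2z₁z₂x = 0} has path-connected complement in ℂ³. -/
/-!
Writing `x = 2t - 1`, the quadric `z₀² = z₁² + z₂² + 2z₁z₂x` becomes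
`z₀² = (1 - t)(z₁ - z₂)² + t(z₁ + z₂)²`, so `z ∉ P` exactly when `z₀²` avoids the segment
`K(z₁, z₂) = [(z₁ - z₂)², (z₁ + z₂)²]` of `ℂ`. A real functional `f` separates `z₀²` from
`K(z₁, z₂)`: `f < u` on the segment and `u < f(z₀²)`. Moving `z₀` along a line `z₀ + tγ` with
`f(γ²) > 0` and `f(z₀γ) ≥ 0` (flip the sign of `γ` if needed) increases `f(z₀²)` past `max u 0`; since `K(rz₁, rz₂) = r²K(z₁, z₂)`, one may
then shrink `(z₁, z₂)` to `0`, and finally join `(α, 0, 0)` to `(1, 0, 0)` inside `ℂˣ × 0 × 0`.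
-/

open Set

def offSegment : Set (ℂ × ℂ × ℂ) :=
  {z | z.1 ^ 2 ∉ segment ℝ ((z.2.1 - z.2.2) ^ 2) ((z.2.1 + z.2.2) ^ 2)}

theorem sq_mem_segment_iff (a b c : ℂ) :
    a ^ 2 ∈ segment ℝ ((b - c) ^ 2) ((b + c) ^ 2) ↔
      ∃ x ∈ Icc (-1 : ℝ) 1, a ^ 2 - b ^ 2 - c ^ 2 - 2 * b * c * (x : ℂ) = 0 := by
  simp only [segment_eq_image, mem_image, Complex.real_smul, Complex.ofReal_sub,
    Complex.ofReal_one]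
  constructor
  · rintro ⟨t, ⟨ht₀, ht₁⟩, ht⟩
    refine ⟨2 * t - 1, ⟨by linarith, by linarith⟩, ?_⟩
    push_cast
    linear_combination -ht
  · rintro ⟨x, ⟨hx₀, hx₁⟩, hx⟩
    refine ⟨(x + 1) / 2, ⟨by linarith, by linarith⟩, ?_⟩
    push_cast
    linear_combination -hx

theorem isClosed_segment {E : Type*} [AddCommGroup E] [Module ℝ E] [TopologicalSpace E]
    [ContinuousAdd E] [ContinuousSMul ℝ E] [T2Space E] (u v : E) : IsClosed (segment ℝ u v) := by
  rw [segment_eq_image]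
  exact (isCompact_Icc.image (by fun_prop)).isClosed

theorem mk_mem_offSegment {f : ℂ →L[ℝ] ℝ} {u : ℝ} {b c : ℂ}
    (hK : ∀ w ∈ segment ℝ ((b - c) ^ 2) ((b + c) ^ 2), f w ≤ u) {a : ℂ} {r : ℝ}
    (h : r ^ 2 * u < f (a ^ 2)) : (a, (r : ℂ) * b, (r : ℂ) * c) ∈ offSegment := by
  rintro ⟨s, t, hs, ht, hst, hw⟩
  have ha : a ^ 2 = (r ^ 2) • (s • (b - c) ^ 2 + t • (b + c) ^ 2) := by
    rw [← hw]
    simp only [Complex.real_smul]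
    push_cast
    ring
  have hfw := hK _ ⟨s, t, hs, ht, hst, rfl⟩
  rw [ha, map_smul, smul_eq_mul] at h
  nlinarith [sq_nonneg r]

theorem mk_zero_zero_mem_offSegment {α : ℂ} (hα : α ≠ 0) : (α, 0, 0) ∈ offSegment := by
  simp [offSegment, segment_same, hα]

theorem exists_joinedIn_lt_map_sq {f : ℂ →L[ℝ] ℝ} (hf : f ≠ 0) (a : ℂ) (M : ℝ) :
    ∃ α, M < f (α ^ 2) ∧ JoinedIn {A | f (a ^ 2) ≤ f (A ^ 2)} a α := by
  obtain ⟨w, hw⟩ : ∃ w, f w = |M - f (a ^ 2)| + 1 :=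
    LinearMap.surjective_of_ne_zero (f := f.toLinearMap) (ContinuousLinearMap.coe_injective.ne hf) _
  obtain ⟨β, rfl⟩ := IsAlgClosed.exists_pow_nat_eq w two_pos
  obtain ⟨γ, hγ, hγa⟩ : ∃ γ, γ ^ 2 = β ^ 2 ∧ 0 ≤ f (a * γ) := by
    rcases le_total 0 (f (a * β)) with h | h
    · exact ⟨β, rfl, h⟩
    · exact ⟨-β, by ring, by simpa [mul_neg] using h⟩
  have expand : ∀ t : ℝ,
      f ((a + t * γ) ^ 2) = f (a ^ 2) + 2 * t * f (a * γ) + t ^ 2 * f (γ ^ 2) := by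
    intro t
    have hsq : (a + t * γ) ^ 2 = a ^ 2 + (2 * t) • (a * γ) + t ^ 2 • γ ^ 2 := by
      simp only [Complex.real_smul]
      push_cast
      ring
    rw [hsq, map_add, map_add, map_smul, map_smul, smul_eq_mul, smul_eq_mul]
  refine ⟨a + γ, ?_, .ofLine (f := fun t : ℝ => a + t * γ) (by fun_prop) (by simp) (by simp) ?_⟩
  · have h₁ := expand 1
    simp only [Complex.ofReal_one, one_mul] at h₁
    rw [h₁, hγ, hw]
    linarith [le_abs_self (M - f (a ^ 2))]
  · rintro _ ⟨t, ht, rfl⟩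
    simp only [mem_ofPred_eq, expand, hγ, hw]
    nlinarith [ht.1, abs_nonneg (M - f (a ^ 2))]

theorem joinedIn_offSegment_one {z : ℂ × ℂ × ℂ} (hz : z ∈ offSegment) :
    JoinedIn offSegment z (1, 0, 0) := by
  obtain ⟨a, b, c⟩ := z
  obtain ⟨f, u, hK, hu⟩ :=
    geometric_hahn_banach_closed_point (convex_segment _ _) (isClosed_segment _ _) hz
  have hf : f ≠ 0 := by
    rintro rfl
    have := hK _ (left_mem_segment ℝ _ _)
    simp only [zero_apply] at this hu
    linarith
  have hK' := fun w hw => (hK w hw).le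
  obtain ⟨α, hα, hjoin⟩ := exists_joinedIn_lt_map_sq hf a (max u 0)
  have hα0 : α ≠ 0 := by
    rintro rfl
    simp at hα
  have move_a : JoinedIn offSegment (a, b, c) (α, b, c) := by
    refine (hjoin.map (f := fun A => (A, b, c)) (by fun_prop)).mono ?_
    rintro _ ⟨A, hA, rfl⟩
    simpa using mk_mem_offSegment (r := 1) hK' (by simpa using hu.trans_le hA)
  have shrink_bc : JoinedIn offSegment (α, b, c) (α, 0, 0) := by
    refine .ofLine (f := fun s : ℝ => (α, ((1 - s : ℝ) : ℂ) * b, ((1 - s : ℝ) : ℂ) * c))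
      (by fun_prop) (by simp) (by simp) ?_
    rintro _ ⟨s, ⟨hs₀, hs₁⟩, rfl⟩
    refine mk_mem_offSegment hK' (lt_of_le_of_lt ?_ hα)
    have : (1 - s) ^ 2 ≤ 1 := by nlinarith
    nlinarith [le_max_left u 0, le_max_right u 0, sq_nonneg (1 - s)]
  have rotate_a : JoinedIn offSegment (α, 0, 0) (1, 0, 0) := by
    have hℂ : IsPathConnected ({0}ᶜ : Set ℂ) :=
      isPathConnected_compl_singleton_of_one_lt_rank (by simp [Complex.rank_real_complex]) 0
    refine ((hℂ.joinedIn α hα0 1 one_ne_zero).map (f := fun A => (A, 0, 0))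
      (by fun_prop)).mono ?_
    rintro _ ⟨A, hA, rfl⟩
    exact mk_zero_zero_mem_offSegment hA
  exact move_a.trans (shrink_bc.trans rotate_a)

/-- The complement in `ℂ³` of
`P = ⋃_{x ∈ [-1,1]} {z : z₀² - z₁² - z₂² - 2z₁z₂x = 0}` is path connected. -/
theorem resolvent_set_pathConnected
    (P : Set (ℂ × ℂ × ℂ))
    (hP : P = {z : ℂ × ℂ × ℂ | ∃ x : ℝ, x ∈ Set.Icc (-1 : ℝ) 1 ∧
      z.1 ^ 2 - z.2.1 ^ 2 - z.2.2 ^ 2 - 2 * z.2.1 * z.2.2 * (x : ℂ) = 0}) :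
    IsPathConnected Pᶜ := by
  have hPc : Pᶜ = offSegment := by
    ext z
    simp only [hP, offSegment, mem_compl_iff, mem_ofPred_eq, sq_mem_segment_iff]
  rw [hPc]
  exact ⟨(1, 0, 0), mk_zero_zero_mem_offSegment one_ne_zero,
    fun _ hz => (joinedIn_offSegment_one hz).symm⟩
end

section
/- For 0 < θ₁, θ₂ < π with cos θ₁ ≠ cos θ₂, the matrix pairs (ρ_{θ₁}(a), ρ_{θ₁}(t)) and (ρ_{θ₂}(a), ρ_{θ₂}(t)) are not simultaneously unitarily equivalent: there is no unitary 2×2 matrix U with Uρ_{θ₁}(a)U* = ρ_{θ₂}(a) and Uρ_{θ₁}(t)U* = ρ_{θ₂}(t). -/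
open Complex Matrix

/-- For `0 < θ₁, θ₂ < π` with `cos θ₁ ≠ cos θ₂`, the pairs
`(ρ_{θ₁}(a), ρ_{θ₁}(t))` and `(ρ_{θ₂}(a), ρ_{θ₂}(t))` are not simultaneously unitarily
equivalent, where `ρ_θ(a) = [[0, e^{iθ}],[e^{-iθ}, 0]]` and `ρ_θ(t) = [[0,1],[1,0]]`. -/
theorem dihedral_reps_inequivalent (θ₁ θ₂ : ℝ) (h₁ : 0 < θ₁) (h₁' : θ₁ < Real.pi)
    (h₂ : 0 < θ₂) (h₂' : θ₂ < Real.pi) (hcos : Real.cos θ₁ ≠ Real.cos θ₂) :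
    ¬ ∃ U ∈ Matrix.unitaryGroup (Fin 2) ℂ,
        U * !![0, Complex.exp (θ₁ * I); Complex.exp (-(θ₁ * I)), 0] * star U =
            !![0, Complex.exp (θ₂ * I); Complex.exp (-(θ₂ * I)), 0] ∧
          U * !![(0:ℂ), 1; 1, 0] * star U = !![(0:ℂ), 1; 1, 0] := by
  rintro ⟨U, hU, ha, ht⟩
  set A₁ := !![0, Complex.exp (θ₁ * I); Complex.exp (-(θ₁ * I)), 0]
  set A₂ := !![0, Complex.exp (θ₂ * I); Complex.exp (-(θ₂ * I)), 0]
  set T : Matrix (Fin 2) (Fin 2) ℂ := !![(0:ℂ), 1; 1, 0]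
  have hsU : star U * U = 1 := hU.1
  have hprod : U * (A₁ * T) * star U = A₂ * T := by
    calc U * (A₁ * T) * star U
        = (U * A₁ * star U) * (U * T * star U) := by
          simp only [Matrix.mul_assoc]
          rw [← Matrix.mul_assoc (star U) U, hsU, Matrix.one_mul]
      _ = A₂ * T := by rw [ha, ht]
  have htr : (A₁ * T).trace = (A₂ * T).trace := by
    calc (A₁ * T).trace = (U * (A₁ * T) * star U).trace := by
          rw [Matrix.trace_mul_cycle, ← Matrix.mul_assoc, hsU, Matrix.one_mul]
      _ = (A₂ * T).trace := by rw [hprod]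
  have hAT : ∀ θ : ℝ, (!![0, Complex.exp (θ * I); Complex.exp (-(θ * I)), 0] * T).trace
      = 2 * Real.cos θ := by
    intro θ
    have h1 : Complex.exp (θ * I) = Real.cos θ + Real.sin θ * I := by
      rw [Complex.exp_mul_I]; push_cast; ring
    have h2 : Complex.exp (-(θ * I)) = Real.cos θ - Real.sin θ * I := by
      rw [← neg_mul, Complex.exp_mul_I]; push_cast; simp; ring
    simp [T, Matrix.trace_fin_two, Matrix.mul_apply, Fin.sum_univ_two, h1, h2]
    ring
  rw [hAT θ₁, hAT θ₂] at htr
  apply hcos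
  have : ((Real.cos θ₁ : ℂ)) = (Real.cos θ₂ : ℂ) := by
    field_simp at htr; exact_mod_cast htr
  exact_mod_cast this
end

section
/- For the finite dihedral group D_n realized by 2n×2n matrices with λ(a) = [[0,T],[T*,0]] and λ(t) = [[0,I],[I,0]], where T is the n×n cyclic permutation matrix, the determinant of R(z) = z₀I + z₁λ(a) + z₂λ(t) equals ∏_{k=0}^{n-1} (z₀² - z₁² - z₂² - 2z₁z₂ cos(2kπ/n)). -/
open Matrix Real

/-- auxiliary reindexing equivalence -/
def dihedralPairEquiv (n : ℕ) : Fin 2 × Fin n ≃ Fin n ⊕ Fin n where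
  toFun p := if p.1 = 0 then Sum.inl p.2 else Sum.inr p.2
  invFun x := Sum.elim (fun k => ((0 : Fin 2), k)) (fun k => ((1 : Fin 2), k)) x
  left_inv := by rintro ⟨i, k⟩; fin_cases i <;> simp
  right_inv := by rintro (k | k) <;> simp

@[simp] theorem dihedralPairEquiv_zero (n : ℕ) (k : Fin n) :
    dihedralPairEquiv n ((0 : Fin 2), k) = Sum.inl k := rfl

@[simp] theorem dihedralPairEquiv_one (n : ℕ) (k : Fin n) :
    dihedralPairEquiv n ((1 : Fin 2), k) = Sum.inr k := by
  simp [dihedralPairEquiv]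

/-- For the left regular representation of the finite dihedral group `Dₙ`, with
`λ(a) = [[0,T],[T*,0]]` and `λ(t) = [[0,I],[I,0]]` (`T` the `n×n` cyclic shift),
`det (z₀ I + z₁ λ(a) + z₂ λ(t)) = ∏_{k=0}^{n-1} (z₀² - z₁² - z₂² - 2z₁z₂ cos(2kπ/n))`. -/
theorem det_dihedral_regular_pencil (n : ℕ) [NeZero n]
    (T : Matrix (Fin n) (Fin n) ℂ) (hT : ∀ i j : Fin n, T i j = if i = j + 1 then 1 else 0)
    (z₀ z₁ z₂ : ℂ) :
    Matrix.det
        (z₀ • (1 : Matrix (Fin n ⊕ Fin n) (Fin n ⊕ Fin n) ℂ) +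
          z₁ • Matrix.fromBlocks 0 T Tᴴ 0 +
          z₂ • Matrix.fromBlocks 0 1 1 0) =
      ∏ k ∈ Finset.range n,
        (z₀ ^ 2 - z₁ ^ 2 - z₂ ^ 2 -
          2 * z₁ * z₂ * (Real.cos (2 * k * π / n) : ℂ)) := by
  have hn0 : n ≠ 0 := NeZero.ne n
  have hn1 : 1 ≤ n := Nat.one_le_iff_ne_zero.mpr hn0
  have hnC : (n : ℂ) ≠ 0 := Nat.cast_ne_zero.mpr hn0
  set ω : ℂ := Complex.exp (2 * π * Complex.I / n) with hωdef
  have hprim : IsPrimitiveRoot ω n := Complex.isPrimitiveRoot_exp n hn0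
  have hω : ω ^ n = 1 := hprim.pow_eq_one
  -- congruence lemma for powers of ω
  have hcong : ∀ x y : ℕ, x ≡ y [MOD n] → ω ^ x = ω ^ y := by
    intro x y h
    rw [pow_eq_pow_mod x hω, pow_eq_pow_mod y hω, h]
  -- val of successor mod n
  have h1 : ∀ i : Fin n, ((i + 1 : Fin n) : ℕ) ≡ (i : ℕ) + 1 [MOD n] := by
    intro i
    have : ((i + 1 : Fin n) : ℕ) = ((i : ℕ) + (1 % n)) % n := by
      rw [Fin.add_def, Fin.val_one']
    rw [this]
    calc ((i : ℕ) + 1 % n) % n ≡ (i : ℕ) + 1 % n [MOD n] := Nat.mod_modEq _ n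
      _ ≡ (i : ℕ) + 1 [MOD n] := Nat.ModEq.add_left _ (Nat.mod_modEq 1 n)
  have hsub : ∀ i : Fin n, ((i - 1 : Fin n) : ℕ) ≡ (i : ℕ) + (n - 1) [MOD n] := by
    intro i
    have h := h1 (i - 1)
    rw [sub_add_cancel] at h
    calc ((i - 1 : Fin n) : ℕ) ≡ ((i - 1 : Fin n) : ℕ) + n [MOD n] :=
          (Nat.add_mod_right _ n).symm
      _ = (((i - 1 : Fin n) : ℕ) + 1) + (n - 1) := by omega
      _ ≡ (i : ℕ) + (n - 1) [MOD n] := h.symm.add_right _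
  -- the DFT matrix and its "inverse"
  set F : Matrix (Fin n) (Fin n) ℂ := Matrix.of (fun i j : Fin n => ω ^ ((i : ℕ) * j)) with hF
  set G : Matrix (Fin n) (Fin n) ℂ :=
    Matrix.of (fun i j : Fin n => ω ^ ((n - 1) * (i : ℕ) * j)) with hG
  have hFapp : ∀ i j : Fin n, F i j = ω ^ ((i : ℕ) * j) := fun i j => rfl
  -- T * F = F * diagonal (ω ^ ((n-1) j))
  have hTF : T * F = F * Matrix.diagonal (fun j : Fin n => ω ^ ((n - 1) * (j : ℕ))) := by
    ext i j
    rw [Matrix.mul_apply, Matrix.mul_diagonal]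
    have step : ∀ l : Fin n, T i l * F l j = if i - 1 = l then F l j else 0 := by
      intro l
      rw [hT]
      by_cases h : i = l + 1
      · rw [if_pos h, if_pos (by rw [h]; exact add_sub_cancel_right l 1), one_mul]
      · rw [if_neg h, if_neg (fun hc => h (by rw [← hc]; exact (sub_add_cancel i 1).symm)),
          zero_mul]
    rw [Finset.sum_congr rfl (fun l _ => step l), Finset.sum_ite_eq]
    simp only [Finset.mem_univ, if_true]
    rw [hFapp, hFapp, ← pow_add]
    apply hcong
    calc ((i - 1 : Fin n) : ℕ) * j ≡ ((i : ℕ) + (n - 1)) * j [MOD n] :=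
          (hsub i).mul_right _
      _ = (i : ℕ) * j + (n - 1) * j := by ring
  -- Tᴴ * F = F * diagonal (ω ^ j)
  have hTHF : Tᴴ * F = F * Matrix.diagonal (fun j : Fin n => ω ^ ((j : ℕ))) := by
    ext i j
    rw [Matrix.mul_apply, Matrix.mul_diagonal]
    have step : ∀ l : Fin n, Tᴴ i l * F l j = if i + 1 = l then F l j else 0 := by
      intro l
      rw [Matrix.conjTranspose_apply, hT]
      by_cases h : l = i + 1
      · rw [if_pos h, if_pos h.symm, star_one, one_mul]
      · rw [if_neg h, if_neg (fun hc => h hc.symm), star_zero, zero_mul]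
    rw [Finset.sum_congr rfl (fun l _ => step l), Finset.sum_ite_eq]
    simp only [Finset.mem_univ, if_true]
    rw [hFapp, hFapp, ← pow_add]
    apply hcong
    calc ((i + 1 : Fin n) : ℕ) * j ≡ ((i : ℕ) + 1) * j [MOD n] := (h1 i).mul_right _
      _ = (i : ℕ) * j + j := by ring
  -- F * G = n • 1
  have hFG : F * G = (n : ℂ) • (1 : Matrix (Fin n) (Fin n) ℂ) := by
    ext i k
    rw [Matrix.mul_apply, Matrix.smul_apply, Matrix.one_apply]
    have expo : ∀ j : Fin n, F i j * G j k
        = (ω ^ ((i : ℕ) + (n - 1) * k)) ^ (j : ℕ) := by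
      intro j
      rw [hFapp]
      show ω ^ ((i : ℕ) * j) * ω ^ ((n - 1) * (j : ℕ) * k) = _
      rw [← pow_mul, ← pow_add]
      congr 1
      ring
    rw [Finset.sum_congr rfl (fun j _ => expo j)]
    set u : ℂ := ω ^ ((i : ℕ) + (n - 1) * k) with hu
    have hun : u ^ n = 1 := by rw [hu, ← pow_mul, mul_comm, pow_mul, hω, one_pow]
    have husum : ∑ j : Fin n, u ^ (j : ℕ) = ∑ j ∈ Finset.range n, u ^ j :=
      Fin.sum_univ_eq_sum_range _ n
    by_cases hik : i = k
    · rw [if_pos hik, husum]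
      have hu1 : u = 1 := by
        rw [hu, hik]
        have hkle : (k : ℕ) ≤ n * k := Nat.le_mul_of_pos_left _ (Nat.pos_of_ne_zero hn0)
        have : (k : ℕ) + (n - 1) * k = n * k := by
          rw [Nat.sub_one_mul]
          exact Nat.add_sub_cancel' hkle
        rw [this, pow_mul, hω, one_pow]
      simp [hu1]
    · rw [if_neg hik, husum]
      have hu1 : u ≠ 1 := by
        intro hu1
        -- u * ω ^ k = ω ^ i, hence ω ^ k = ω ^ i, hence i = k
        have hmul : u * ω ^ (k : ℕ) = ω ^ ((i : ℕ)) := by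
          rw [hu, ← pow_add]
          apply hcong
          calc (i : ℕ) + (n - 1) * k + k = (i : ℕ) + n * k := by
                have hkle : (k : ℕ) ≤ n * k := Nat.le_mul_of_pos_left _ (Nat.pos_of_ne_zero hn0)
                rw [add_assoc, Nat.sub_one_mul, Nat.sub_add_cancel hkle]
            _ ≡ (i : ℕ) + 0 [MOD n] := Nat.ModEq.add_left _ (Nat.modEq_zero_iff_dvd.mpr ⟨k, rfl⟩)
            _ = (i : ℕ) := by ring
        rw [hu1, one_mul] at hmul
        exact hik (Fin.ext (hprim.pow_inj i.isLt k.isLt hmul.symm))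
      rw [geom_sum_eq hu1, hun, sub_self, zero_div, smul_zero]
  have hdetF : F.det ≠ 0 := by
    intro h
    have hd := congrArg Matrix.det hFG
    rw [Matrix.det_mul, h, zero_mul, Matrix.det_smul, Matrix.det_one, mul_one] at hd
    exact pow_ne_zero _ hnC hd.symm
  -- the diagonal entries
  set d₁ : Fin n → ℂ := fun j => z₁ * ω ^ ((n - 1) * (j : ℕ)) + z₂ with hd₁
  set d₂ : Fin n → ℂ := fun j => z₁ * ω ^ ((j : ℕ)) + z₂ with hd₂
  set N : Matrix (Fin n ⊕ Fin n) (Fin n ⊕ Fin n) ℂ :=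
    Matrix.fromBlocks (z₀ • 1) (Matrix.diagonal d₁) (Matrix.diagonal d₂) (z₀ • 1) with hN
  set P : Matrix (Fin n ⊕ Fin n) (Fin n ⊕ Fin n) ℂ := Matrix.fromBlocks F 0 0 F with hP
  -- M in block form
  have hM : z₀ • (1 : Matrix (Fin n ⊕ Fin n) (Fin n ⊕ Fin n) ℂ) +
      z₁ • Matrix.fromBlocks 0 T Tᴴ 0 + z₂ • Matrix.fromBlocks 0 1 1 0 =
      Matrix.fromBlocks (z₀ • 1) (z₁ • T + z₂ • 1) (z₁ • Tᴴ + z₂ • 1) (z₀ • 1) := by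
    rw [← Matrix.fromBlocks_one, Matrix.fromBlocks_smul, Matrix.fromBlocks_smul,
      Matrix.fromBlocks_smul, Matrix.fromBlocks_add, Matrix.fromBlocks_add]
    simp
  -- intertwining
  have hBF : (z₁ • T + z₂ • 1) * F = F * Matrix.diagonal d₁ := by
    have : Matrix.diagonal d₁ = z₁ • Matrix.diagonal (fun j : Fin n => ω ^ ((n - 1) * (j : ℕ)))
        + z₂ • 1 := by
      rw [← Matrix.diagonal_one, ← Matrix.diagonal_smul, ← Matrix.diagonal_smul,
        Matrix.diagonal_add]
      funext j
      simp [hd₁, hd₂]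
    rw [this, Matrix.add_mul, Matrix.mul_add, Matrix.smul_mul, Matrix.smul_mul, Matrix.mul_smul,
      Matrix.mul_smul, hTF, Matrix.one_mul, Matrix.mul_one]
  have hCF : (z₁ • Tᴴ + z₂ • 1) * F = F * Matrix.diagonal d₂ := by
    have : Matrix.diagonal d₂ = z₁ • Matrix.diagonal (fun j : Fin n => ω ^ ((j : ℕ)))
        + z₂ • 1 := by
      rw [← Matrix.diagonal_one, ← Matrix.diagonal_smul, ← Matrix.diagonal_smul,
        Matrix.diagonal_add]
      funext j
      simp [hd₁, hd₂]
    rw [this, Matrix.add_mul, Matrix.mul_add, Matrix.smul_mul, Matrix.smul_mul, Matrix.mul_smul,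
      Matrix.mul_smul, hTHF, Matrix.one_mul, Matrix.mul_one]
  have key : (Matrix.fromBlocks (z₀ • 1) (z₁ • T + z₂ • 1) (z₁ • Tᴴ + z₂ • 1) (z₀ • 1)) * P
      = P * N := by
    rw [hP, hN, Matrix.fromBlocks_multiply, Matrix.fromBlocks_multiply]
    simp only [Matrix.mul_zero, Matrix.zero_mul, smul_zero, add_zero, zero_add, hBF, hCF,
      Matrix.smul_mul, Matrix.mul_smul, Matrix.one_mul, Matrix.mul_one]
  -- determinant of N via block-diagonal reindexing
  set B : Fin n → Matrix (Fin 2) (Fin 2) ℂ := fun k => !![z₀, d₁ k; d₂ k, z₀] with hB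
  have hdetN : N.det = ∏ k : Fin n, (z₀ * z₀ - d₁ k * d₂ k) := by
    have hsubm : N.submatrix (dihedralPairEquiv n) (dihedralPairEquiv n)
        = Matrix.blockDiagonal B := by
      ext ⟨i, k⟩ ⟨j, l⟩
      rw [Matrix.submatrix_apply]
      fin_cases i <;> fin_cases j <;>
        simp [hN, hB, dihedralPairEquiv, Matrix.blockDiagonal_apply,
          Matrix.one_apply, Matrix.diagonal_apply, Matrix.smul_apply, smul_ite]
    rw [← Matrix.det_submatrix_equiv_self (dihedralPairEquiv n) N, hsubm,
      Matrix.det_blockDiagonal]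
    refine Finset.prod_congr rfl fun k _ => ?_
    rw [hB]
    rw [Matrix.det_fin_two_of]
  -- put everything together
  have hdet : (z₀ • (1 : Matrix (Fin n ⊕ Fin n) (Fin n ⊕ Fin n) ℂ) +
      z₁ • Matrix.fromBlocks 0 T Tᴴ 0 + z₂ • Matrix.fromBlocks 0 1 1 0).det = N.det := by
    have hPdet : P.det ≠ 0 := by
      rw [hP, Matrix.det_fromBlocks_zero₂₁]
      exact mul_ne_zero hdetF hdetF
    have := congrArg Matrix.det key
    rw [Matrix.det_mul, Matrix.det_mul] at this
    rw [hM]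
    rw [mul_comm P.det N.det] at this
    exact mul_right_cancel₀ hPdet this
  rw [hdet, hdetN, ← Fin.prod_univ_eq_prod_range
    (fun k => z₀ ^ 2 - z₁ ^ 2 - z₂ ^ 2 - 2 * z₁ * z₂ * (Real.cos (2 * k * π / n) : ℂ)) n]
  refine Finset.prod_congr rfl fun k _ => ?_
  -- per-eigenvalue identity
  have hω1 : ω ^ ((n - 1) * (k : ℕ)) * ω ^ ((k : ℕ)) = 1 := by
    rw [← pow_add]
    have hkle : (k : ℕ) ≤ n * k := Nat.le_mul_of_pos_left _ (Nat.pos_of_ne_zero hn0)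
    have : (n - 1) * (k : ℕ) + k = n * k := by
      rw [Nat.sub_one_mul]
      exact Nat.sub_add_cancel hkle
    rw [this, pow_mul, hω, one_pow]
  have hωk : ω ^ ((k : ℕ)) = Complex.exp (((2 * (k : ℝ) * π / n : ℝ) : ℂ) * Complex.I) := by
    rw [hωdef, ← Complex.exp_nat_mul]
    congr 1
    push_cast
    ring
  have hωnk : ω ^ ((n - 1) * (k : ℕ))
      = Complex.exp (-(((2 * (k : ℝ) * π / n : ℝ) : ℂ)) * Complex.I) := by
    have h := eq_inv_of_mul_eq_one_left hω1
    rw [h, hωk, ← Complex.exp_neg]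
    congr 1
    ring
  have hcos : ω ^ ((n - 1) * (k : ℕ)) + ω ^ ((k : ℕ))
      = 2 * ((Real.cos (2 * (k : ℝ) * π / n) : ℝ) : ℂ) := by
    rw [hωnk, hωk, Complex.ofReal_cos, Complex.two_cos, add_comm]
  rw [hd₁, hd₂]
  show z₀ * z₀ - (z₁ * ω ^ ((n - 1) * (k : ℕ)) + z₂) * (z₁ * ω ^ ((k : ℕ)) + z₂) = _
  linear_combination (-(z₁ ^ 2)) * hω1 - z₁ * z₂ * hcos
end

section
/- With T the n×n cyclic shift matrix and λ(a) = [[0,T],[T*,0]], λ(t) = [[0,I],[I,0]] as 2n×2n matrices, the matrix R(z) = z₀I + z₁λ(a) + z₂λ(t) is singular if and only if z₀² - z₁² - z₂² - 2z₁z₂ cos(2kπ/n) = 0 for some k ∈ {0,1,...,n-1}. -/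
open Matrix Real

lemma dih_TTH (n : ℕ) [NeZero n] (T : Matrix (Fin n) (Fin n) ℂ)
    (hT : ∀ i j : Fin n, T i j = if i = j + 1 then 1 else 0) : T * Tᴴ = 1 := by
  ext i j
  simp only [Matrix.mul_apply, Matrix.conjTranspose_apply, hT, Matrix.one_apply]
  have h : ∀ k : Fin n,
      (if i = k + 1 then (1:ℂ) else 0) * star (if j = k + 1 then (1:ℂ) else 0)
        = if k = i - 1 then (if j = k + 1 then (1:ℂ) else 0) else 0 := by
    intro k
    have hk : (k = i - 1) ↔ (i = k + 1) := by
      constructor <;> intro h <;> simp [h]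
    by_cases h1 : i = k + 1 <;> by_cases h2 : j = k + 1 <;>
      simp [h1, h2, hk]
  rw [Finset.sum_congr rfl fun k _ => h k, Finset.sum_ite_eq' Finset.univ (i-1)]
  simp [sub_add_cancel, eq_comm]

lemma dih_det_tri (n : ℕ) [NeZero n] (T : Matrix (Fin n) (Fin n) ℂ)
    (hT : ∀ i j : Fin n, T i j = if i = j + 1 then 1 else 0) (c d : ℂ) :
    (c • (1 : Matrix (Fin n) (Fin n) ℂ) + d • T + d • Tᴴ).det
      = ∏ k : Fin n, (c + 2 * d * (Real.cos (2 * (k : ℕ) * π / n) : ℂ)) := by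
  have hn : n ≠ 0 := NeZero.ne n
  set ζ : ℂ := Complex.exp (2 * π * Complex.I / n) with hζ
  have hprim : IsPrimitiveRoot ζ n := Complex.isPrimitiveRoot_exp n hn
  have hord : orderOf ζ = n := hprim.eq_orderOf.symm
  have hmod : ∀ a b : ℕ, a % n = b % n → ζ ^ a = ζ ^ b := by
    intro a b h
    rw [← pow_mod_orderOf ζ a, ← pow_mod_orderOf ζ b, hord, h]
  set F : Matrix (Fin n) (Fin n) ℂ := Matrix.vandermonde fun j : Fin n => ζ ^ (j : ℕ) with hF
  set S : Matrix (Fin n) (Fin n) ℂ := c • 1 + d • T + d • Tᴴ with hS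
  set μ : Fin n → ℂ := fun k => c + d * (ζ ^ (k : ℕ) + ζ ^ ((n - 1) * (k : ℕ))) with hμ
  have hFjk : ∀ j k : Fin n, F j k = ζ ^ ((j : ℕ) * (k : ℕ)) := by
    intro j k; rw [hF, Matrix.vandermonde_apply, ← pow_mul]
  have key : S * F = F * Matrix.diagonal μ := by
    ext i k
    rw [Matrix.mul_apply, Matrix.mul_diagonal]
    have hsummand : ∀ j : Fin n, S i j * F j k =
        (if j = i then c * F j k else 0) + (if j = i - 1 then d * F j k else 0)
          + (if j = i + 1 then d * F j k else 0) := by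
      intro j
      have hone : (1 : Matrix (Fin n) (Fin n) ℂ) i j = if j = i then 1 else 0 := by
        rw [Matrix.one_apply]; simp [eq_comm]
      have hTij : T i j = if j = i - 1 then (1:ℂ) else 0 := by
        rw [hT]; congr 1
        simp only [eq_iff_iff]
        constructor <;> intro h <;> simp [h]
      have hTHij : Tᴴ i j = if j = i + 1 then (1:ℂ) else 0 := by
        rw [Matrix.conjTranspose_apply, hT]
        by_cases h : j = i + 1 <;> simp [h]
      rw [hS]
      simp only [Matrix.add_apply, Matrix.smul_apply, hone, hTij, hTHij, smul_eq_mul]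
      split_ifs <;> ring
    rw [Finset.sum_congr rfl fun j _ => hsummand j]
    rw [Finset.sum_add_distrib, Finset.sum_add_distrib,
      Finset.sum_ite_eq' Finset.univ i (fun j => c * F j k),
      Finset.sum_ite_eq' Finset.univ (i-1) (fun j => d * F j k),
      Finset.sum_ite_eq' Finset.univ (i+1) (fun j => d * F j k)]
    simp only [Finset.mem_univ, if_true, hFjk]
    have h2 : ζ ^ (((i + 1 : Fin n) : ℕ) * (k : ℕ)) = ζ ^ ((i : ℕ) * (k : ℕ)) * ζ ^ (k : ℕ) := by
      rw [← pow_add]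
      apply hmod
      have hv : ((i + 1 : Fin n) : ℕ) = ((i : ℕ) + 1) % n := by
        rw [Fin.val_add, Fin.val_one']
        conv_rhs => rw [Nat.add_mod]
        rw [Nat.mod_eq_of_lt i.isLt]
      rw [hv, Nat.mod_mul_mod]
      congr 1; ring
    have h1 : ζ ^ (((i - 1 : Fin n) : ℕ) * (k : ℕ))
        = ζ ^ ((i : ℕ) * (k : ℕ)) * ζ ^ ((n - 1) * (k : ℕ)) := by
      rw [← pow_add]
      apply hmod
      have hv : ((i - 1 : Fin n) : ℕ) = (n - 1 % n + (i : ℕ)) % n := by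
        rw [Fin.sub_def, Fin.val_one']
      rcases eq_or_ne n 1 with h | h
      · subst h; simp [Nat.mod_one]
      · have h1n : 1 % n = 1 := Nat.mod_eq_of_lt (by omega)
        rw [hv, h1n, Nat.mod_mul_mod]
        congr 1; ring
    rw [h1, h2, hμ]
    ring
  have hFdet : F.det ≠ 0 := by
    rw [hF, Matrix.det_vandermonde]
    rw [Finset.prod_ne_zero_iff]
    intro i _
    rw [Finset.prod_ne_zero_iff]
    intro j hj
    have hij : (i : ℕ) < (j : ℕ) := Fin.lt_def.mp (Finset.mem_Ioi.mp hj)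
    refine sub_ne_zero_of_ne fun h => ?_
    have := hprim.pow_inj j.isLt i.isLt h
    omega
  have hdet : S.det = ∏ k : Fin n, μ k := by
    have := congrArg Matrix.det key
    rw [Matrix.det_mul, Matrix.det_mul, Matrix.det_diagonal] at this
    rw [mul_comm (F.det)] at this
    exact mul_right_cancel₀ hFdet this
  rw [hdet]
  refine Finset.prod_congr rfl fun k _ => ?_
  have e1 : ζ ^ (k : ℕ) = Complex.exp (((2 * (k:ℕ) * π / n : ℝ) : ℂ) * Complex.I) := by
    rw [hζ, ← Complex.exp_nat_mul]
    congr 1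
    push_cast
    ring
  have e2 : ζ ^ ((n - 1) * (k : ℕ))
      = Complex.exp (-(((2 * (k:ℕ) * π / n : ℝ) : ℂ) * Complex.I)) := by
    have hmul : ζ ^ ((n - 1) * (k : ℕ)) * ζ ^ (k : ℕ) = 1 := by
      rw [← pow_add]
      have hh : (n - 1) * (k : ℕ) + (k : ℕ) = n * (k : ℕ) := by
        have : 1 ≤ n := Nat.one_le_iff_ne_zero.mpr hn
        nlinarith [Nat.sub_add_cancel this]
      rw [hh, pow_mul, hprim.pow_eq_one, one_pow]
    rw [eq_inv_of_mul_eq_one_left hmul, e1, ← Complex.exp_neg]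
  show c + d * (ζ ^ (k : ℕ) + ζ ^ ((n - 1) * (k : ℕ))) = _
  rw [e1, e2]
  have h2c := Complex.two_cos (((2 * (k:ℕ) * π / n : ℝ) : ℂ))
  rw [neg_mul] at h2c
  rw [← h2c, ← Complex.ofReal_cos]
  ring

/-- With `T` the `n×n` cyclic shift and `λ(a) = [[0,T],[T*,0]]`, `λ(t) = [[0,I],[I,0]]`,
the matrix `R(z) = z₀ I + z₁ λ(a) + z₂ λ(t)` is singular if and only if
`z₀² - z₁² - z₂² - 2z₁z₂ cos(2kπ/n) = 0` for some `k ∈ {0, …, n-1}`. -/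
theorem dihedral_regular_pencil_singular_iff (n : ℕ) [NeZero n]
    (T : Matrix (Fin n) (Fin n) ℂ) (hT : ∀ i j : Fin n, T i j = if i = j + 1 then 1 else 0)
    (z₀ z₁ z₂ : ℂ) :
    ¬ IsUnit
        (z₀ • (1 : Matrix (Fin n ⊕ Fin n) (Fin n ⊕ Fin n) ℂ) +
          z₁ • Matrix.fromBlocks 0 T Tᴴ 0 +
          z₂ • Matrix.fromBlocks 0 1 1 0) ↔
      ∃ k < n,
        z₀ ^ 2 - z₁ ^ 2 - z₂ ^ 2 - 2 * z₁ * z₂ * (Real.cos (2 * k * π / n) : ℂ) = 0 := by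
  set B : Matrix (Fin n) (Fin n) ℂ := z₁ • T + z₂ • 1 with hB
  set C : Matrix (Fin n) (Fin n) ℂ := z₁ • Tᴴ + z₂ • 1 with hC
  set X : Matrix (Fin n) (Fin n) ℂ := z₀ ^ 2 • 1 - B * C with hX
  have hM : z₀ • (1 : Matrix (Fin n ⊕ Fin n) (Fin n ⊕ Fin n) ℂ) +
      z₁ • Matrix.fromBlocks 0 T Tᴴ 0 + z₂ • Matrix.fromBlocks 0 1 1 0
      = Matrix.fromBlocks (z₀ • 1) B C (z₀ • 1) := by
    rw [← Matrix.fromBlocks_one, Matrix.fromBlocks_smul, Matrix.fromBlocks_smul,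
      Matrix.fromBlocks_smul, Matrix.fromBlocks_add, Matrix.fromBlocks_add]
    congr 1 <;> simp [hB, hC]
  rw [hM]
  -- singularity iff det of Schur-type complement vanishes
  have hdet0 : (Matrix.fromBlocks (z₀ • (1 : Matrix (Fin n) (Fin n) ℂ)) B C (z₀ • 1)).det = 0
      ↔ X.det = 0 := by
    rcases eq_or_ne z₀ 0 with hz | hz
    · subst hz
      have hX' : X = -(B * C) := by rw [hX]; simp
      have h1 : (Matrix.fromBlocks ((0:ℂ) • (1 : Matrix (Fin n) (Fin n) ℂ)) B C ((0:ℂ) • 1))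
          = Matrix.fromBlocks 0 B C 0 := by simp
      rw [h1, hX']
      set J : Matrix (Fin n ⊕ Fin n) (Fin n ⊕ Fin n) ℂ :=
        Matrix.fromBlocks 0 1 1 0 with hJ
      have hJJ : J * J = 1 := by
        rw [hJ, Matrix.fromBlocks_multiply]
        simp [Matrix.fromBlocks_one]
      have hJdet : J.det ≠ 0 := by
        intro h
        have := congrArg Matrix.det hJJ
        rw [Matrix.det_mul, h, Matrix.det_one] at this
        simp at this
      have hRJ : Matrix.fromBlocks (0 : Matrix (Fin n) (Fin n) ℂ) B C 0 * J
          = Matrix.fromBlocks B 0 0 C := by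
        rw [hJ, Matrix.fromBlocks_multiply]
        simp
      have hd : (Matrix.fromBlocks (0 : Matrix (Fin n) (Fin n) ℂ) B C 0).det * J.det
          = B.det * C.det := by
        rw [← Matrix.det_mul, hRJ, Matrix.det_fromBlocks_zero₂₁]
      constructor
      · intro h
        have : B.det * C.det = 0 := by rw [← hd, h, zero_mul]
        rw [Matrix.det_neg, Matrix.det_mul]
        simp [this]
      · intro h
        rw [Matrix.det_neg, Matrix.det_mul] at h
        rcases mul_eq_zero.mp h with h' | h'
        · exact absurd h' (pow_ne_zero _ (by norm_num))
        · have := hd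
          rw [h'] at this
          rcases mul_eq_zero.mp (by rw [this] : (Matrix.fromBlocks (0 : Matrix (Fin n) (Fin n) ℂ) B C 0).det * J.det = 0) with h'' | h''
          · exact h''
          · exact absurd h'' hJdet
    · have hright : (z₀ • (1 : Matrix (Fin n) (Fin n) ℂ)) * (z₀⁻¹ • 1) = 1 := by
        simp [Matrix.smul_mul, Matrix.mul_smul, smul_smul, mul_inv_cancel₀ hz,
          inv_mul_cancel₀ hz]
      have hleft : (z₀⁻¹ • (1 : Matrix (Fin n) (Fin n) ℂ)) * (z₀ • 1) = 1 := by
        simp [Matrix.smul_mul, Matrix.mul_smul, smul_smul, mul_inv_cancel₀ hz,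
          inv_mul_cancel₀ hz]
      haveI : Invertible (z₀ • (1 : Matrix (Fin n) (Fin n) ℂ)) := ⟨z₀⁻¹ • 1, hleft, hright⟩
      have hinv : ⅟(z₀ • (1 : Matrix (Fin n) (Fin n) ℂ)) = z₀⁻¹ • 1 :=
        invOf_eq_right_inv hright
      rw [Matrix.det_fromBlocks₂₂, hinv]
      have hmid : B * (z₀⁻¹ • (1 : Matrix (Fin n) (Fin n) ℂ)) * C = z₀⁻¹ • (B * C) := by
        rw [Matrix.mul_smul, Matrix.mul_one, Matrix.smul_mul]
      have hsub : z₀ • (1 : Matrix (Fin n) (Fin n) ℂ) - z₀⁻¹ • (B * C) = z₀⁻¹ • X := by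
        rw [hX, smul_sub, smul_smul]
        congr 2
        field_simp
      rw [hmid, hsub, Matrix.det_smul, Matrix.det_smul, Matrix.det_one, mul_one]
      constructor
      · intro h
        rcases mul_eq_zero.mp h with h' | h'
        · exact absurd h' (pow_ne_zero _ hz)
        · rcases mul_eq_zero.mp h' with h'' | h''
          · exact absurd h'' (pow_ne_zero _ (inv_ne_zero hz))
          · exact h''
      · intro h
        rw [h]
        ring
  have hXtri : X = (z₀ ^ 2 - z₁ ^ 2 - z₂ ^ 2) • (1 : Matrix (Fin n) (Fin n) ℂ)
      + (-(z₁ * z₂)) • T + (-(z₁ * z₂)) • Tᴴ := by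
    have h1 : T * Tᴴ = 1 := dih_TTH n T hT
    rw [hX, hB, hC]
    rw [add_mul, mul_add, mul_add, Matrix.smul_mul, Matrix.smul_mul, Matrix.smul_mul,
      Matrix.smul_mul, Matrix.mul_smul, Matrix.mul_smul, Matrix.mul_smul, Matrix.mul_smul,
      h1, Matrix.one_mul, Matrix.mul_one, Matrix.mul_one]
    module
  have hXdet : X.det = ∏ k : Fin n,
      ((z₀ ^ 2 - z₁ ^ 2 - z₂ ^ 2) + 2 * (-(z₁ * z₂)) * (Real.cos (2 * (k : ℕ) * π / n) : ℂ)) := by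
    rw [hXtri, dih_det_tri n T hT]
  rw [show (¬ IsUnit (Matrix.fromBlocks (z₀ • (1 : Matrix (Fin n) (Fin n) ℂ)) B C (z₀ • 1)))
      ↔ (Matrix.fromBlocks (z₀ • (1 : Matrix (Fin n) (Fin n) ℂ)) B C (z₀ • 1)).det = 0 from by
    rw [Matrix.isUnit_iff_isUnit_det, isUnit_iff_ne_zero, not_ne_iff]]
  rw [hdet0, hXdet, Finset.prod_eq_zero_iff]
  constructor
  · rintro ⟨k, -, hk⟩
    exact ⟨(k : ℕ), k.isLt, by linear_combination hk⟩
  · rintro ⟨k, hkn, hk⟩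
    refine ⟨⟨k, hkn⟩, Finset.mem_univ _, ?_⟩
    have hv : ((⟨k, hkn⟩ : Fin n) : ℕ) = k := rfl
    rw [hv]
    linear_combination hk
end

section
/- The function (1/(4π)) ∫₀^{2π} log|1 - z₁² - z₂² - 2z₁z₂ cos θ| dθ (with value -∞ allowed) equals -∞ exactly at the four points (z₁,z₂) ∈ {(1,0),(-1,0),(0,1),(0,-1)} of ℂ². -/
/-!
Write the argument of the logarithm as `A - B cos θ` with `A = 1 - z₁² - z₂²` and `B = 2 z₁ z₂`.
If `A = B = 0` the integrand is `-∞` everywhere. Otherwise `θ ↦ A - B cos θ` is real-analytic,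
so `log ‖A - B cos θ‖` is integrable, and it vanishes at most on a level set of `cos`, which is
countable; hence the integral is finite. Finally `A = B = 0` exactly at the four points.
-/

open Real MeasureTheory ENNReal

/-- The negative part of `log ‖x‖` in `[0, ∞]`, with `log 0 = -∞`. -/
noncomputable def logNormNegPart {E : Type*} [Norm E] (x : E) : ℝ≥0∞ :=
  if ‖x‖ = 0 then ⊤ else ENNReal.ofReal (-log ‖x‖)

@[simp]
lemma logNormNegPart_zero {E : Type*} [SeminormedAddGroup E] : logNormNegPart (0 : E) = ⊤ := by
  simp [logNormNegPart]

lemma lintegral_logNormNegPart_ne_top {α E : Type*} [MeasurableSpace α] [NormedAddGroup E]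
    {μ : Measure α} {f : α → E} (hf : ∀ᵐ x ∂μ, f x ≠ 0)
    (hlog : Integrable (fun x => log ‖f x‖) μ) :
    ∫⁻ x, logNormNegPart (f x) ∂μ ≠ ⊤ := by
  refine ne_top_of_le_ne_top hlog.hasFiniteIntegral.ne (lintegral_mono_ae ?_)
  filter_upwards [hf] with x hx
  rw [logNormNegPart, if_neg (norm_ne_zero_iff.mpr hx)]
  exact (ENNReal.ofReal_le_ofReal (neg_le_abs _)).trans_eq (Real.enorm_eq_ofReal_abs _).symm

lemma countable_setOf_ofReal_cos_eq (c : ℂ) : {θ : ℝ | (cos θ : ℂ) = c}.Countable := by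
  rcases Set.eq_empty_or_nonempty {θ : ℝ | (cos θ : ℂ) = c} with h | ⟨x, hx⟩
  · exact h ▸ Set.countable_empty
  refine ((Set.countable_range fun k : ℤ => 2 * k * π + x).union
    (Set.countable_range fun k : ℤ => 2 * k * π - x)).mono fun θ hθ => ?_
  obtain ⟨k, hk | hk⟩ := Real.cos_eq_cos_iff.mp (Complex.ofReal_injective (hx.trans hθ.symm))
  · exact Or.inl ⟨k, hk.symm⟩
  · exact Or.inr ⟨k, hk.symm⟩

lemma ae_sub_mul_ofReal_cos_ne_zero {A B : ℂ} (h : A ≠ 0 ∨ B ≠ 0) (μ : Measure ℝ)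
    [NullSingletonClass μ] : ∀ᵐ θ ∂μ, A - B * (cos θ : ℂ) ≠ 0 := by
  rcases eq_or_ne B 0 with rfl | hB
  · simp [h.resolve_right (not_not.mpr rfl)]
  filter_upwards [(countable_setOf_ofReal_cos_eq (A / B)).ae_notMem μ] with θ hθ hzero
  exact hθ (by rw [eq_div_iff hB]; linear_combination -hzero)

lemma analyticOnNhd_sub_mul_ofReal_cos (A B : ℂ) (s : Set ℝ) :
    AnalyticOnNhd ℝ (fun θ : ℝ => A - B * (cos θ : ℂ)) s := fun _ _ =>
  analyticAt_const.sub
    (analyticAt_const.mul ((Complex.ofRealCLM.analyticAt _).comp analyticAt_cos))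

lemma intervalIntegrable_log_norm_sub_mul_ofReal_cos (A B : ℂ) (a b : ℝ) :
    IntervalIntegrable (fun θ => log ‖A - B * (cos θ : ℂ)‖) volume a b :=
  (analyticOnNhd_sub_mul_ofReal_cos A B _).meromorphicOn.intervalIntegrable_log_norm

lemma lintegral_logNormNegPart_sub_mul_ofReal_cos_eq_top_iff (A B : ℂ) :
    ∫⁻ θ in Set.Icc 0 (2 * π), logNormNegPart (A - B * (cos θ : ℂ)) = ⊤ ↔ A = 0 ∧ B = 0 := by
  constructor
  · intro htop
    by_contra! h
    refine lintegral_logNormNegPart_ne_top (ae_sub_mul_ofReal_cos_ne_zero ?_ _) ?_ htop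
    · tauto
    · exact (intervalIntegrable_iff_integrableOn_Icc_of_le (by positivity)).mp
        (intervalIntegrable_log_norm_sub_mul_ofReal_cos A B 0 (2 * π))
  · rintro ⟨rfl, rfl⟩
    simp [Real.volume_Icc, pi_pos]

lemma one_sub_sq_sub_sq_eq_zero_and_two_mul_mul_eq_zero_iff {R : Type*} [CommRing R]
    [NoZeroDivisors R] [NeZero (2 : R)] (x y : R) :
    1 - x ^ 2 - y ^ 2 = 0 ∧ 2 * x * y = 0 ↔
      (x, y) ∈ ({(1, 0), (-1, 0), (0, 1), (0, -1)} : Set (R × R)) := by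
  simp only [Set.mem_insert_iff, Set.mem_singleton_iff, Prod.mk.injEq, mul_assoc,
    mul_eq_zero, two_ne_zero, false_or]
  constructor
  · rintro ⟨hsq, rfl | rfl⟩
    · rcases sq_eq_one_iff.mp (by linear_combination -hsq : y ^ 2 = 1) with rfl | rfl <;> simp
    · rcases sq_eq_one_iff.mp (by linear_combination -hsq : x ^ 2 = 1) with rfl | rfl <;> simp
  · rintro (⟨rfl, rfl⟩ | ⟨rfl, rfl⟩ | ⟨rfl, rfl⟩ | ⟨rfl, rfl⟩) <;> norm_num

/-- The integral `(1/4π) ∫₀^{2π} log|1 - z₁² - z₂² - 2z₁z₂ cos θ| dθ` equals `-∞` (i.e. the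
negative part of the extended-real-valued integrand, `+∞` where the argument of `log`
vanishes, has infinite integral) exactly at the four points `(±1, 0), (0, ±1)`. -/
theorem FK_determinant_vanishes_iff (z₁ z₂ : ℂ) :
    (∫⁻ θ in Set.Icc (0 : ℝ) (2 * π),
        (if ‖1 - z₁ ^ 2 - z₂ ^ 2 - 2 * z₁ * z₂ * (Real.cos θ : ℂ)‖ = 0 then ⊤
          else ENNReal.ofReal
            (-(Real.log
              (‖1 - z₁ ^ 2 - z₂ ^ 2 - 2 * z₁ * z₂ * (Real.cos θ : ℂ)‖)))) = ⊤)
      ↔ (z₁, z₂) ∈ ({((1:ℂ), (0:ℂ)), ((-1:ℂ), (0:ℂ)), ((0:ℂ), (1:ℂ)), ((0:ℂ), (-1:ℂ))} :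
          Set (ℂ × ℂ)) :=
  (lintegral_logNormNegPart_sub_mul_ofReal_cos_eq_top_iff _ _).trans
    (one_sub_sq_sub_sq_eq_zero_and_two_mul_mul_eq_zero_iff z₁ z₂)
end
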